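/- The normalized lattice sums (1/log N) ∑_{x ∈ ℤ⁴, 0 < ‖x‖ ≤ N} ‖x‖^{−4} converge, as the integer N → ∞, to the positive limit 2π² (the surface area of the unit sphere in ℝ⁴), where ‖x‖ denotes the Euclidean norm. -/

import Mathlib

open MeasureTheory Filter Topology

/-- The Euclidean norm of a lattice point of `ℤ⁴`. -/
noncomputable def eNormZ (x : Fin 4 → ℤ) : ℝ := Real.sqrt (∑ i, ((x i : ℝ)) ^ 2)

/-!
Let `A k` be the number of nonzero `x ∈ ℤⁿ` with `‖x‖ ≤ k`. Since `ℤⁿ` has covolume one,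
`A k ~ ω kⁿ`, where `ω` is the volume of the unit ball. Grouping the lattice points by `⌈‖x‖⌉`
and summing by parts squeezes `∑_{‖x‖ ≤ N} ‖x‖⁻ⁿ` between the sums
`A N * w N + ∑_{j < N} A j * (w j - w (j + 1))` for the weights `w k = k⁻ⁿ` and
`w k = (k - 1)⁻ⁿ`. For both weights the `j`-th term is `~ n ω / j`, so both sums are
`~ n ω log N`. In dimension four, `n ω = 4 · π² / 2 = 2π²`.
-/

open Metric Finset Asymptotics

theorem Finset.sum_comp_eq_card_smul_add_sum {α M : Type*} [AddCommGroup M] (s : Finset α)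
    {κ : α → ℕ} {N : ℕ} (hκ : ∀ x ∈ s, κ x ≤ N) (w : ℕ → M) :
    ∑ x ∈ s, w (κ x) = #s • w N + ∑ j ∈ range N, #{x ∈ s | κ x ≤ j} • (w j - w (j + 1)) := by
  have htelescope : ∀ x ∈ s,
      w (κ x) = w N + ∑ j ∈ range N, if κ x ≤ j then w j - w (j + 1) else 0 := by
    intro x hx
    have hIco : {j ∈ range N | κ x ≤ j} = Ico (κ x) N := by
      ext j; simp [and_comm]
    have := sum_Ico_sub (fun j => -w j) (hκ x hx)
    simp only [neg_sub_neg] at this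
    rw [← sum_filter, hIco, this]
    abel
  simp_rw [sum_congr rfl htelescope, sum_add_distrib, sum_const, sum_comm (s := s),
    ← sum_filter, sum_const]

theorem tendsto_sum_range_div_log_of_tendsto_mul {u : ℕ → ℝ} {L : ℝ}
    (h : Tendsto (fun k : ℕ => ((k : ℝ) + 1) * u k) atTop (𝓝 L)) :
    Tendsto (fun n : ℕ => (∑ k ∈ range n, u k) / Real.log n) atTop (𝓝 L) := by
  set H : ℕ → ℝ := fun n => ∑ k ∈ range n, ((k : ℝ) + 1)⁻¹
  have hlog : Tendsto (fun n : ℕ => Real.log n) atTop atTop :=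
    Real.tendsto_log_atTop.comp tendsto_natCast_atTop_atTop
  have hHlog : Tendsto (fun n => H n - Real.log n) atTop (𝓝 Real.eulerMascheroniConstant) := by
    simpa [H, harmonic] using Real.tendsto_harmonic_sub_log
  have hHlog_small : (fun n => H n - Real.log n) =o[atTop] fun n => Real.log n :=
    (hHlog.isBigO_one ℝ).trans_isLittleO
      ((isLittleO_one_left_iff ℝ).2 (tendsto_norm_atTop_atTop.comp hlog))
  have hH : Tendsto H atTop atTop := (hHlog.add_atTop hlog).congr fun n => by ring
  have hH_log : H =O[atTop] fun n => Real.log n :=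
    (hHlog_small.isBigO.add (isBigO_refl _ _)).congr_left fun n => by ring
  have hu : (fun k : ℕ => u k - L * ((k : ℝ) + 1)⁻¹) =o[atTop] fun k : ℕ => ((k : ℝ) + 1)⁻¹ := by
    have h0 := (isLittleO_one_iff ℝ).2 (by simpa using h.sub_const L)
    refine (h0.mul_isBigO (isBigO_refl (fun k : ℕ => ((k : ℝ) + 1)⁻¹) atTop)).congr
      (fun k => ?_) (fun k => one_mul _)
    field_simp
  have herr : (fun n => (∑ k ∈ range n, u k) - L * Real.log n) =o[atTop] fun n => Real.log n := by
    refine ((hu.sum_range (fun k => by positivity) hH).trans_isBigO hH_log).add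
      (hHlog_small.const_mul_left L) |>.congr_left fun n => ?_
    simp only [H, sum_sub_distrib, ← mul_sum]
    ring
  refine (zero_add L ▸ herr.tendsto_div_nhds_zero.add_const L).congr' ?_
  filter_upwards [hlog.eventually_gt_atTop 0] with n hn
  field_simp
  ring

theorem tendsto_mul_one_sub_one_sub_inv_pow (d : ℕ) :
    Tendsto (fun x : ℝ => x * (1 - (1 - x⁻¹) ^ d)) atTop (𝓝 d) := by
  have hderiv : HasDerivAt (fun t : ℝ => (1 - t) ^ d) (-d) 0 := by
    simpa using ((hasDerivAt_id (0 : ℝ)).const_sub 1).fun_pow d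
  have hslope := (hasDerivAt_iff_tendsto_slope_zero.1 hderiv).neg.comp
    (tendsto_inv_atTop_nhdsGT_zero.mono_right (nhdsGT_le_nhdsNE 0))
  rw [neg_neg] at hslope
  refine hslope.congr fun x => ?_
  simp only [Function.comp_apply, zero_add, sub_zero, one_pow, inv_inv, smul_eq_mul]
  ring

lemma tendsto_mul_sub_inv_pow_succ (d : ℕ) :
    Tendsto (fun j : ℕ => ((j : ℝ) + 1) * (j : ℝ) ^ d *
      (((j : ℝ) ^ d)⁻¹ - (((j + 1 : ℕ) : ℝ) ^ d)⁻¹)) atTop (𝓝 d) := by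
  refine ((tendsto_mul_one_sub_one_sub_inv_pow d).comp
    (tendsto_atTop_add_const_right _ 1 tendsto_natCast_atTop_atTop)).congr' ?_
  filter_upwards [eventually_ge_atTop 1] with j hj
  have hj : (j : ℝ) ≠ 0 := by positivity
  have hsub : 1 - ((j : ℝ) + 1)⁻¹ = j / (j + 1) := by field_simp; ring
  simp only [Function.comp_apply, hsub, div_pow]
  push_cast
  field_simp

lemma tendsto_pow_mul_inv_max_pred_pow (d : ℕ) :
    Tendsto (fun j : ℕ => (j : ℝ) ^ d * (max ((j : ℝ) - 1) 1 ^ d)⁻¹) atTop (𝓝 1) := by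
  have hinv : Tendsto (fun j : ℕ => ((j : ℝ))⁻¹) atTop (𝓝 0) :=
    tendsto_inv_atTop_zero.comp tendsto_natCast_atTop_atTop
  have := ((tendsto_const_nhds (x := (1 : ℝ))).sub hinv).pow d |>.inv₀ (by simp)
  rw [sub_zero, one_pow, inv_one] at this
  refine this.congr' ?_
  filter_upwards [eventually_ge_atTop 2] with j hj
  have hj : (2 : ℝ) ≤ j := by exact_mod_cast hj
  have hj1 : (j : ℝ) - 1 ≠ 0 := by linarith
  have hj0 : (j : ℝ) ≠ 0 := by linarith
  have hsub : 1 - (j : ℝ)⁻¹ = (j - 1) / j := by field_simp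
  rw [max_eq_left (by linarith), hsub, div_pow]
  field_simp

lemma tendsto_mul_sub_inv_max_pred_pow (d : ℕ) :
    Tendsto (fun j : ℕ => ((j : ℝ) + 1) * (j : ℝ) ^ d *
      ((max ((j : ℝ) - 1) 1 ^ d)⁻¹ - (max (((j + 1 : ℕ) : ℝ) - 1) 1 ^ d)⁻¹)) atTop (𝓝 d) := by
  have hinv : Tendsto (fun j : ℕ => ((j : ℝ))⁻¹) atTop (𝓝 0) :=
    tendsto_inv_atTop_zero.comp tendsto_natCast_atTop_atTop
  have := ((tendsto_const_nhds (x := (1 : ℝ))).add hinv).mul (tendsto_pow_mul_inv_max_pred_pow d)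
    |>.mul ((tendsto_mul_one_sub_one_sub_inv_pow d).comp tendsto_natCast_atTop_atTop)
  rw [add_zero, one_mul, one_mul] at this
  refine this.congr' ?_
  filter_upwards [eventually_ge_atTop 2] with j hj
  have hj : (2 : ℝ) ≤ j := by exact_mod_cast hj
  have hj1 : (j : ℝ) - 1 ≠ 0 := by linarith
  have hj0 : (j : ℝ) ≠ 0 := by linarith
  rw [max_eq_left (by linarith), max_eq_left (by push_cast; linarith)]
  have hsub : 1 - (j : ℝ)⁻¹ = (j - 1) / j := by field_simp
  simp only [Function.comp_apply, hsub, div_pow]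
  push_cast
  field_simp
  ring

theorem tendsto_mul_add_sum_mul_sub_div_log {A w : ℕ → ℝ} {a c : ℝ} {d : ℕ}
    (hA : Tendsto (fun j : ℕ => A j / (j : ℝ) ^ d) atTop (𝓝 c))
    (hw : Tendsto (fun j : ℕ => (j : ℝ) ^ d * w j) atTop (𝓝 a))
    (hdw : Tendsto (fun j : ℕ => ((j : ℝ) + 1) * (j : ℝ) ^ d * (w j - w (j + 1))) atTop (𝓝 d)) :
    Tendsto (fun N : ℕ => (A N * w N + ∑ j ∈ range N, A j * (w j - w (j + 1))) / Real.log N)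
      atTop (𝓝 (d * c)) := by
  have hlog : Tendsto (fun n : ℕ => Real.log n) atTop atTop :=
    Real.tendsto_log_atTop.comp tendsto_natCast_atTop_atTop
  have hpow : ∀ᶠ j : ℕ in atTop, (j : ℝ) ^ d ≠ 0 := by
    filter_upwards [eventually_ge_atTop 1] with j hj
    positivity
  have hboundary : Tendsto (fun N : ℕ => A N * w N / Real.log N) atTop (𝓝 0) := by
    refine ((hA.mul hw).congr' ?_).div_atTop hlog
    filter_upwards [hpow] with j hj
    field_simp
  have hbulk : Tendsto (fun j : ℕ => ((j : ℝ) + 1) * (A j * (w j - w (j + 1)))) atTop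
      (𝓝 (d * c)) := by
    rw [mul_comm]
    refine (hA.mul hdw).congr' ?_
    filter_upwards [hpow] with j hj
    field_simp
  simpa [add_div] using hboundary.add (tendsto_sum_range_div_log_of_tendsto_mul hbulk)

section RadialSums

variable {α : Type*} {S : Set α} {r : α → ℝ}

lemma sum_comp_natCeil_eq (hfin : ∀ k : ℕ, {x ∈ S | r x ≤ k}.Finite) (N : ℕ) (w : ℕ → ℝ) :
    ∑ x ∈ (hfin N).toFinset, w ⌈r x⌉₊ = {x ∈ S | r x ≤ N}.ncard * w N +
      ∑ j ∈ range N, ({x ∈ S | r x ≤ j}.ncard : ℝ) * (w j - w (j + 1)) := by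
  rw [Finset.sum_comp_eq_card_smul_add_sum _
      (fun x hx => Nat.ceil_le.2 ((hfin N).mem_toFinset.1 hx).2),
    Set.ncard_eq_toFinset_card _ (hfin N), nsmul_eq_mul]
  congr 1
  refine sum_congr rfl fun j hj => ?_
  have hjN : (j : ℝ) ≤ N := by exact_mod_cast (mem_range.1 hj).le
  rw [nsmul_eq_mul, Set.ncard_eq_toFinset_card _ (hfin j)]
  congr 3
  ext x
  simp only [mem_filter, Set.Finite.mem_toFinset, Set.mem_ofPred_eq, Nat.ceil_le]
  constructor
  · rintro ⟨⟨hS, -⟩, hj⟩; exact ⟨hS, hj⟩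
  · rintro ⟨hS, hj⟩; exact ⟨⟨hS, hj.trans hjN⟩, hj⟩

theorem tendsto_sum_inv_pow_div_log {d : ℕ} {c : ℝ} (hr : ∀ x ∈ S, 1 ≤ r x)
    (hfin : ∀ k : ℕ, {x ∈ S | r x ≤ k}.Finite)
    (hcount : Tendsto (fun k : ℕ => ({x ∈ S | r x ≤ k}.ncard : ℝ) / (k : ℝ) ^ d) atTop (𝓝 c)) :
    Tendsto (fun N : ℕ => (∑ x ∈ (hfin N).toFinset, (r x ^ d)⁻¹) / Real.log N)
      atTop (𝓝 (d * c)) := by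
  have hw : Tendsto (fun j : ℕ => (j : ℝ) ^ d * ((j : ℝ) ^ d)⁻¹) atTop (𝓝 1) := by
    refine tendsto_const_nhds.congr' ?_
    filter_upwards [eventually_ge_atTop 1] with j hj
    have : (j : ℝ) ^ d ≠ 0 := by positivity
    field_simp
  have hlower := tendsto_mul_add_sum_mul_sub_div_log hcount hw (tendsto_mul_sub_inv_pow_succ d)
  -- `⌈r x⌉₊ = 1` forces `r x = 1`: the `max` keeps the weight `1` there instead of `0⁻¹ = 0`.
  have hupper := tendsto_mul_add_sum_mul_sub_div_log hcount (tendsto_pow_mul_inv_max_pred_pow d)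
    (tendsto_mul_sub_inv_max_pred_pow d)
  refine tendsto_of_tendsto_of_tendsto_of_le_of_le hlower hupper (fun N => ?_) (fun N => ?_)
  all_goals
    dsimp only
    gcongr
  · rw [← sum_comp_natCeil_eq hfin N (fun k => ((k : ℝ) ^ d)⁻¹)]
    refine sum_le_sum fun x hx => ?_
    have hx1 := hr x ((hfin N).mem_toFinset.1 hx).1
    gcongr
    exact Nat.le_ceil _
  · rw [← sum_comp_natCeil_eq hfin N (fun k => (max ((k : ℝ) - 1) 1 ^ d)⁻¹)]
    refine sum_le_sum fun x hx => ?_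
    have hx1 := hr x ((hfin N).mem_toFinset.1 hx).1
    gcongr
    exact max_le (by linarith [Nat.ceil_lt_add_one (by linarith : 0 ≤ r x)]) hx1

end RadialSums

noncomputable def intPoint {ι : Type*} (x : ι → ℤ) : EuclideanSpace ℝ ι :=
  WithLp.toLp 2 fun i => (x i : ℝ)

lemma intPoint_injective {ι : Type*} : Function.Injective (intPoint (ι := ι)) := by
  intro x y h
  funext i
  simpa [intPoint] using congrFun (congrArg WithLp.ofLp h) i

section IntLattice

variable {ι : Type*} [Fintype ι]

lemma abs_le_norm_intPoint (x : ι → ℤ) (i : ι) : |(x i : ℝ)| ≤ ‖intPoint x‖ :=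
  PiLp.norm_apply_le (intPoint x) i

lemma one_le_norm_intPoint {x : ι → ℤ} (hx : x ≠ 0) : 1 ≤ ‖intPoint x‖ := by
  obtain ⟨i, hi⟩ := Function.ne_iff.1 hx
  have : (1 : ℝ) ≤ |(x i : ℝ)| := by exact_mod_cast Int.one_le_abs hi
  exact this.trans (abs_le_norm_intPoint x i)

lemma finite_norm_intPoint_le (R : ℝ) : {x : ι → ℤ | ‖intPoint x‖ ≤ R}.Finite := by
  classical
  refine (Set.finite_Icc (-fun _ => ⌈R⌉) fun _ => ⌈R⌉).subset fun x hx => ?_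
  have hbound : ∀ i, |x i| ≤ ⌈R⌉ := fun i => by
    have := ((abs_le_norm_intPoint x i).trans hx).trans (Int.le_ceil R)
    exact_mod_cast this
  exact ⟨fun i => neg_le_of_abs_le (hbound i), fun i => le_of_abs_le (hbound i)⟩

lemma finite_ne_zero_norm_intPoint_le (R : ℝ) :
    {x : ι → ℤ | x ≠ 0 ∧ ‖intPoint x‖ ≤ R}.Finite :=
  (finite_norm_intPoint_le R).subset fun _ hx => hx.2

variable (ι) in
abbrev intLattice : Submodule ℤ (EuclideanSpace ℝ ι) :=
  Submodule.span ℤ (Set.range (EuclideanSpace.basisFun ι ℝ).toBasis)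

lemma coe_intLattice : (intLattice ι : Set (EuclideanSpace ℝ ι)) = Set.range intPoint := by
  ext y
  rw [SetLike.mem_coe, Module.Basis.mem_span_iff_repr_mem]
  simp only [OrthonormalBasis.coe_toBasis_repr_apply, EuclideanSpace.basisFun_repr,
    algebraMap_int_eq, eq_intCast, Set.mem_range, intPoint]
  constructor
  · intro h
    choose x hx using h
    exact ⟨x, by ext i; simp [hx]⟩
  · rintro ⟨x, rfl⟩ i
    exact ⟨x i, rfl⟩

lemma covolume_intLattice : ZLattice.covolume (intLattice ι) = 1 := by
  rw [ZLattice.covolume_eq_measure_fundamentalDomain (intLattice ι) volume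
    (ZSpan.isAddFundamentalDomain _ volume), measureReal_def,
    measure_congr (ZSpan.fundamentalDomain_ae_parallelepiped _ volume)]
  simp [(EuclideanSpace.basisFun ι ℝ).volume_parallelepiped]

lemma tendsto_ncard_norm_intPoint_le_div_pow [Nonempty ι] :
    Tendsto (fun R : ℝ => ({x : ι → ℤ | ‖intPoint x‖ ≤ R}.ncard : ℝ) / R ^ Fintype.card ι)
      atTop (𝓝 (volume.real (closedBall (0 : EuclideanSpace ℝ ι) 1))) := by
  set n := Fintype.card ι
  have hn : n ≠ 0 := Fintype.card_ne_zero
  have hball : {y : EuclideanSpace ℝ ι | y ∈ Set.univ ∧ ‖y‖ ^ n ≤ 1} = closedBall 0 1 := by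
    ext y; simp [pow_le_one_iff_of_nonneg (norm_nonneg y) hn]
  -- The lattice-point count of Mathlib takes a gauge homogeneous of degree `n`.
  have hcount := ZLattice.covolume.tendsto_card_le_div' (intLattice ι) (X := Set.univ)
    (F := fun y => ‖y‖ ^ n) (by simp) (fun y r hr => by
      rw [norm_smul, Real.norm_of_nonneg hr, mul_pow, finrank_euclideanSpace])
    (hball ▸ isBounded_closedBall) (hball ▸ measurableSet_closedBall)
    (by rw [hball, frontier_closedBall _ one_ne_zero]; exact Measure.addHaar_sphere volume 0 1)
  rw [hball, covolume_intLattice, div_one] at hcount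
  refine (hcount.comp (tendsto_pow_atTop hn)).congr' ?_
  filter_upwards [eventually_ge_atTop 0] with R hR
  have himage : {y : EuclideanSpace ℝ ι | y ∈ Set.univ ∧ ‖y‖ ^ n ≤ R ^ n} ∩ intLattice ι =
      intPoint '' {x : ι → ℤ | ‖intPoint x‖ ≤ R} := by
    rw [coe_intLattice]
    ext y
    simp only [Set.mem_univ, true_and, Set.mem_inter_iff, Set.mem_ofPred_eq, Set.mem_range,
      Set.mem_image, pow_le_pow_iff_left₀ (norm_nonneg y) hR hn]
    constructor
    · rintro ⟨hy, x, rfl⟩; exact ⟨x, hy, rfl⟩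
    · rintro ⟨x, hx, rfl⟩; exact ⟨hx, x, rfl⟩
  simp only [Function.comp_apply, himage, Nat.card_coe_set_eq,
    Set.ncard_image_of_injective _ intPoint_injective]

lemma tendsto_ncard_ne_zero_norm_intPoint_le_div_pow [Nonempty ι] :
    Tendsto (fun k : ℕ => ({x : ι → ℤ | x ≠ 0 ∧ ‖intPoint x‖ ≤ k}.ncard : ℝ) /
      (k : ℝ) ^ Fintype.card ι)
      atTop (𝓝 (volume.real (closedBall (0 : EuclideanSpace ℝ ι) 1))) := by
  have h := ((tendsto_ncard_norm_intPoint_le_div_pow (ι := ι)).comp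
    tendsto_natCast_atTop_atTop).sub
    ((tendsto_pow_atTop (Fintype.card_ne_zero (α := ι))).comp
      tendsto_natCast_atTop_atTop).inv_tendsto_atTop
  rw [sub_zero] at h
  refine h.congr fun k => ?_
  have hzero : (0 : ι → ℤ) ∈ {x : ι → ℤ | ‖intPoint x‖ ≤ k} := by
    have : intPoint (0 : ι → ℤ) = 0 := by ext; simp [intPoint]
    simp [this]
  have hdiff : {x : ι → ℤ | x ≠ 0 ∧ ‖intPoint x‖ ≤ k} = {x | ‖intPoint x‖ ≤ k} \ {0} := by
    ext x; simp [and_comm]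
  rw [hdiff, Set.ncard_sdiff_singleton_of_mem hzero,
    Nat.cast_sub ((Set.ncard_pos (finite_norm_intPoint_le _)).2 ⟨0, hzero⟩)]
  simp [sub_div]

theorem tendsto_sum_inv_norm_intPoint_pow_div_log [Nonempty ι] :
    Tendsto (fun N : ℕ => (∑ x ∈ (finite_ne_zero_norm_intPoint_le (ι := ι) N).toFinset,
        (‖intPoint x‖ ^ Fintype.card ι)⁻¹) / Real.log N)
      atTop (𝓝 (Fintype.card ι * volume.real (closedBall (0 : EuclideanSpace ℝ ι) 1))) :=
  tendsto_sum_inv_pow_div_log (S := {x | x ≠ 0}) (fun _ hx => one_le_norm_intPoint hx)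
    (fun k => finite_ne_zero_norm_intPoint_le k) tendsto_ncard_ne_zero_norm_intPoint_le_div_pow

end IntLattice

lemma eNormZ_eq_norm_intPoint (x : Fin 4 → ℤ) : eNormZ x = ‖intPoint x‖ := by
  simp [eNormZ, EuclideanSpace.norm_eq, intPoint]

lemma volume_real_closedBall_fin_four :
    volume.real (closedBall (0 : EuclideanSpace ℝ (Fin 4)) 1) = Real.pi ^ 2 / 2 := by
  rw [measureReal_def, InnerProductSpace.volume_closedBall_of_dim_even (k := 2) (by simp)]
  simp [ENNReal.toReal_ofReal (by positivity : (0 : ℝ) ≤ Real.pi ^ 2 / 2)]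

theorem stmt12 :
    Tendsto (fun N : ℕ =>
        (1 / Real.log N) *
          ∑' x : Fin 4 → ℤ,
            Set.indicator {x : Fin 4 → ℤ | x ≠ 0 ∧ eNormZ x ≤ N}
              (fun x => 1 / eNormZ x ^ 4) x)
      atTop (𝓝 (2 * Real.pi ^ 2)) := by
  have h := tendsto_sum_inv_norm_intPoint_pow_div_log (ι := Fin 4)
  rw [volume_real_closedBall_fin_four, Fintype.card_fin] at h
  convert h using 2 with N
  · simp_rw [eNormZ_eq_norm_intPoint, one_div, inv_mul_eq_div]
    congr 1
    rw [tsum_eq_sum (s := (finite_ne_zero_norm_intPoint_le (N : ℝ)).toFinset)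
      fun x hx => Set.indicator_of_notMem (by simpa using hx) _]
    exact sum_congr rfl fun x hx => Set.indicator_of_mem (by simpa using hx) _
  · push_cast; ring
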